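/- arXiv:2311.17855 — 6 statements merged into one kernel-verified Lean document; each statement's English description precedes it below -/
import Mathlib

section
/- Let P₁, P₂ ∈ ℝ^{S×S} be row-stochastic matrices such that for every x the support of the row P₁(x,·) is contained in the support of P₂(x,·), and let γ ∈ [0,1). Then I − γP₂ is invertible and for every v ∈ ℝ^S, ‖(I − γP₂)⁻¹(γP₁ − γP₂)v‖∞ ≤ (γ√2/(1−γ)) · (max_{x∈S} √(KL(P₁(x,·)‖P₂(x,·)))) · ‖v‖∞. -/
open Finset Matrix

/-- Supremum norm of a vector indexed by a finite type. -/
noncomputable def supNorm {S : Type*} [Fintype S] (v : S → ℝ) : ℝ := ⨆ x, |v x|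

/-- KL divergence of finitely supported probability vectors,
with the convention `0 * log 0 = 0` (automatic since `Real.log 0 = 0`). -/
noncomputable def KLfin {S : Type*} [Fintype S] (p q : S → ℝ) : ℝ :=
  ∑ y, p y * Real.log (p y / q y)

/-!
`P₂` is a contraction for the sup norm, so `u = (I - γP₂)u + γP₂u` gives
`(1 - γ)‖u‖∞ ≤ ‖(I - γP₂)u‖∞`; this yields both the invertibility of `I - γP₂` and the norm
bound `1 / (1 - γ)` for its inverse. The sup-norm operator norm of `γ(P₁ - P₂)` is its largest
row `ℓ¹`-norm, which Pinsker's inequality `‖p - q‖₁ ≤ √(2 KL(p‖q))` bounds by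
`γ √2 maxₓ √KL(P₁(x,·)‖P₂(x,·))`. Pinsker's inequality itself follows from the pointwise bound
`3(t - 1)² ≤ (2t + 4)(t log t - t + 1)` and the Cauchy–Schwarz inequality.
-/

open Real InformationTheory

lemma supNorm_eq_norm {S : Type*} [Fintype S] [Nonempty S] (v : S → ℝ) : supNorm v = ‖v‖ := by
  have hle : ∀ x, |v x| ≤ supNorm v := le_ciSup (Set.finite_range _).bddAbove
  refine le_antisymm (ciSup_le fun x => ?_) ?_
  · simpa using norm_le_pi_norm v x
  · exact (pi_norm_le_iff_of_nonneg ((abs_nonneg _).trans (hle (Classical.arbitrary S)))).2 hle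

section SupNormOperator

variable {m n : Type*} [Fintype m] [Fintype n]

lemma norm_mulVec_le_of_sum_abs_le (A : Matrix m n ℝ) {c : ℝ} (hc : 0 ≤ c)
    (hA : ∀ i, ∑ j, |A i j| ≤ c) (v : n → ℝ) : ‖A *ᵥ v‖ ≤ c * ‖v‖ := by
  refine (pi_norm_le_iff_of_nonneg (by positivity)).2 fun i => ?_
  calc ‖(A *ᵥ v) i‖ = |∑ j, A i j * v j| := rfl
    _ ≤ ∑ j, |A i j| * ‖v‖ := by
      refine (abs_sum_le_sum_abs _ _).trans (sum_le_sum fun j _ => ?_)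
      rw [abs_mul]
      exact mul_le_mul_of_nonneg_left (norm_le_pi_norm v j) (abs_nonneg _)
    _ = (∑ j, |A i j|) * ‖v‖ := (sum_mul ..).symm
    _ ≤ c * ‖v‖ := by gcongr; exact hA i

lemma norm_mulVec_le_of_rowStochastic (P : Matrix m n ℝ) (hpos : ∀ i j, 0 ≤ P i j)
    (hsum : ∀ i, ∑ j, P i j = 1) (v : n → ℝ) : ‖P *ᵥ v‖ ≤ ‖v‖ := by
  simpa using norm_mulVec_le_of_sum_abs_le P zero_le_one
    (fun i => by simp [abs_of_nonneg (hpos i _), hsum]) v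

end SupNormOperator

section Resolvent

variable {S : Type*} [Fintype S] [DecidableEq S] {P : Matrix S S ℝ} {γ : ℝ}

lemma one_sub_mul_norm_le_norm_one_sub_smul_mulVec (hP : ∀ u, ‖P *ᵥ u‖ ≤ ‖u‖) (hγ : 0 ≤ γ)
    (u : S → ℝ) : (1 - γ) * ‖u‖ ≤ ‖(1 - γ • P) *ᵥ u‖ := by
  have hu : u = (1 - γ • P) *ᵥ u + γ • (P *ᵥ u) := by
    simp [sub_mulVec, smul_mulVec]
  have := calc ‖u‖ = ‖(1 - γ • P) *ᵥ u + γ • (P *ᵥ u)‖ := congrArg norm hu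
    _ ≤ ‖(1 - γ • P) *ᵥ u‖ + ‖γ • (P *ᵥ u)‖ := norm_add_le _ _
    _ ≤ ‖(1 - γ • P) *ᵥ u‖ + γ * ‖u‖ := by
      rw [norm_smul, norm_of_nonneg hγ]
      gcongr
      exact hP u
  linarith

lemma isUnit_one_sub_smul (hP : ∀ u, ‖P *ᵥ u‖ ≤ ‖u‖) (hγ0 : 0 ≤ γ) (hγ1 : γ < 1) :
    IsUnit (1 - γ • P) := by
  refine mulVec_injective_iff_isUnit.1 fun a b hab => ?_
  have h := one_sub_mul_norm_le_norm_one_sub_smul_mulVec hP hγ0 (a - b)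
  rw [mulVec_sub, hab, sub_self, norm_zero] at h
  have : ‖a - b‖ ≤ 0 := by nlinarith [norm_nonneg (a - b)]
  exact sub_eq_zero.1 (norm_le_zero_iff.1 this)

lemma norm_inv_one_sub_smul_mulVec_le (hP : ∀ u, ‖P *ᵥ u‖ ≤ ‖u‖) (hγ0 : 0 ≤ γ) (hγ1 : γ < 1)
    (w : S → ℝ) : ‖(1 - γ • P)⁻¹ *ᵥ w‖ ≤ ‖w‖ / (1 - γ) := by
  have hdet := (isUnit_iff_isUnit_det _).1 (isUnit_one_sub_smul hP hγ0 hγ1)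
  rw [le_div_iff₀ (sub_pos.2 hγ1), mul_comm]
  have h := one_sub_mul_norm_le_norm_one_sub_smul_mulVec hP hγ0 ((1 - γ • P)⁻¹ *ᵥ w)
  rwa [mulVec_mulVec, mul_nonsing_inv _ hdet, one_mulVec] at h

end Resolvent

lemma le_of_hasDerivAt_of_sign_change {f f' : ℝ → ℝ} (hf : ∀ x, 0 < x → HasDerivAt f (f' x) x)
    (hf'₁ : ∀ x, 0 < x → x < 1 → f' x ≤ 0) (hf'₂ : ∀ x, 1 < x → 0 ≤ f' x) {t : ℝ} (ht : 0 < t) :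
    f 1 ≤ f t := by
  have hcont : ∀ D ⊆ Set.Ioi (0 : ℝ), ContinuousOn f D :=
    fun D hD x hx => (hf x (hD hx)).continuousAt.continuousWithinAt
  rcases le_total t 1 with h | h
  · refine antitoneOn_of_hasDerivWithinAt_nonpos (f' := f') (convex_Ioc 0 1)
      (hcont _ fun x hx => hx.1) (fun x hx => ?_) (fun x hx => ?_) ⟨ht, h⟩ ⟨one_pos, le_rfl⟩ h
    all_goals rw [interior_Ioc] at hx
    exacts [(hf x hx.1).hasDerivWithinAt, hf'₁ x hx.1 hx.2]
  · refine monotoneOn_of_hasDerivWithinAt_nonneg (f' := f') (convex_Ici 1)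
      (hcont _ fun x hx => Set.mem_Ioi.2 (one_pos.trans_le hx)) (fun x hx => ?_) (fun x hx => ?_)
      Set.self_mem_Ici h h
    all_goals rw [interior_Ici] at hx
    exacts [(hf x (one_pos.trans hx)).hasDerivWithinAt, hf'₂ x hx]

lemma monotoneOn_add_one_mul_log_sub : MonotoneOn (fun t => (t + 1) * log t - 2 * (t - 1))
    (Set.Ioi 0) := by
  have hderiv : ∀ x, 0 < x →
      HasDerivAt (fun t => (t + 1) * log t - 2 * (t - 1)) (log x + x⁻¹ - 1) x := fun x hx => by
    refine ((((hasDerivAt_id' x).add_const 1).mul (hasDerivAt_log hx.ne')).sub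
      (((hasDerivAt_id' x).sub_const 1).const_mul 2)).congr_deriv ?_
    field_simp
    ring
  refine monotoneOn_of_hasDerivWithinAt_nonneg (f' := fun x => log x + x⁻¹ - 1) (convex_Ioi 0)
    (fun x hx => (hderiv x hx).continuousAt.continuousWithinAt) (fun x hx => ?_) (fun x hx => ?_)
  all_goals rw [interior_Ioi] at hx
  · exact (hderiv x hx).hasDerivWithinAt
  · linarith [one_sub_inv_le_log_of_pos hx]

lemma three_mul_sq_sub_one_le_mul_klFun {t : ℝ} (ht : 0 ≤ t) :
    3 * (t - 1) ^ 2 ≤ (2 * t + 4) * klFun t := by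
  rcases ht.eq_or_lt with rfl | ht
  · norm_num [klFun_zero]
  set φ : ℝ → ℝ := fun t => (t + 1) * log t - 2 * (t - 1)
  have hφ1 : φ 1 = 0 := by simp [φ]
  have hderiv : ∀ x, 0 < x → HasDerivAt (fun t => (2 * t + 4) * klFun t - 3 * (t - 1) ^ 2)
      (4 * φ x) x := fun x hx => by
    refine ((((hasDerivAt_id' x).const_mul 2).add_const 4).mul (hasDerivAt_klFun hx.ne')).sub
      ((((hasDerivAt_id' x).sub_const 1).pow 2).const_mul 3) |>.congr_deriv ?_
    simp only [φ, klFun_apply]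
    ring
  have h := le_of_hasDerivAt_of_sign_change hderiv
    (fun x hx hx1 => by
      linarith [monotoneOn_add_one_mul_log_sub hx (Set.mem_Ioi.2 one_pos) hx1.le])
    (fun x hx1 => by
      linarith [monotoneOn_add_one_mul_log_sub (Set.mem_Ioi.2 one_pos) (one_pos.trans hx1) hx1.le])
    ht
  simp only [klFun_one] at h
  linarith

lemma mul_klFun_div {p q : ℝ} (hs : q = 0 → p = 0) :
    q * klFun (p / q) = p * log (p / q) + q - p := by
  rcases eq_or_ne q 0 with hq | hq
  · simp [hq, hs hq]
  · rw [klFun_apply]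
    field_simp

lemma abs_sub_le_sqrt_mul_sqrt_mul_klFun {p q : ℝ} (hp : 0 ≤ p) (hq : 0 ≤ q)
    (hs : q = 0 → p = 0) : |p - q| ≤ √((2 * p + 4 * q) / 3) * √(q * klFun (p / q)) := by
  rw [← sqrt_mul (by positivity), ← sqrt_sq_eq_abs]
  refine sqrt_le_sqrt ?_
  rcases hq.eq_or_lt with rfl | hq
  · simp [hs rfl]
  have h := mul_le_mul_of_nonneg_left (three_mul_sq_sub_one_le_mul_klFun (div_nonneg hp hq.le))
    (sq_nonneg q)
  have hpq : q * (p / q) = p := by field_simp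
  calc (p - q) ^ 2 = q ^ 2 * (3 * (p / q - 1) ^ 2) / 3 := by rw [← hpq]; field_simp
    _ ≤ q ^ 2 * ((2 * (p / q) + 4) * klFun (p / q)) / 3 := by gcongr
    _ = (2 * p + 4 * q) / 3 * (q * klFun (p / q)) := by rw [← hpq]; field_simp

theorem sum_abs_sub_le_sqrt_two_mul_sqrt_KLfin {S : Type*} [Fintype S] {p q : S → ℝ}
    (hp : ∀ y, 0 ≤ p y) (hq : ∀ y, 0 ≤ q y) (hps : ∑ y, p y = 1) (hqs : ∑ y, q y = 1)
    (hs : ∀ y, q y = 0 → p y = 0) :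
    ∑ y, |p y - q y| ≤ √2 * √(KLfin p q) := by
  have hweights : ∑ y, (2 * p y + 4 * q y) / 3 = 2 := by
    rw [← sum_div, sum_add_distrib, ← mul_sum, ← mul_sum, hps, hqs]
    norm_num
  have hkl : ∑ y, q y * klFun (p y / q y) = KLfin p q := by
    simp only [mul_klFun_div (hs _), sum_sub_distrib, sum_add_distrib, hps, hqs, KLfin]
    ring
  calc ∑ y, |p y - q y| ≤ ∑ y, √((2 * p y + 4 * q y) / 3) * √(q y * klFun (p y / q y)) :=
        sum_le_sum fun y _ => abs_sub_le_sqrt_mul_sqrt_mul_klFun (hp y) (hq y) (hs y)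
    _ ≤ √(∑ y, (2 * p y + 4 * q y) / 3) * √(∑ y, q y * klFun (p y / q y)) :=
        sum_sqrt_mul_sqrt_le _ (fun y => by have := hp y; have := hq y; positivity)
          (fun y => mul_nonneg (hq y) (klFun_nonneg (div_nonneg (hp y) (hq y))))
    _ = √2 * √(KLfin p q) := by rw [hweights, hkl]

theorem stmt1 {S : Type*} [Fintype S] [Nonempty S] [DecidableEq S]
    (P₁ P₂ : Matrix S S ℝ) (γ : ℝ)
    (h1pos : ∀ x y, 0 ≤ P₁ x y) (h1sum : ∀ x, ∑ y, P₁ x y = 1)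
    (h2pos : ∀ x y, 0 ≤ P₂ x y) (h2sum : ∀ x, ∑ y, P₂ x y = 1)
    (hsupp : ∀ x y, P₂ x y = 0 → P₁ x y = 0)
    (hγ0 : 0 ≤ γ) (hγ1 : γ < 1) :
    IsUnit ((1 : Matrix S S ℝ) - γ • P₂) ∧
      ∀ v : S → ℝ,
        supNorm (((1 : Matrix S S ℝ) - γ • P₂)⁻¹.mulVec ((γ • P₁ - γ • P₂).mulVec v)) ≤
          (γ * Real.sqrt 2 / (1 - γ)) *
            (⨆ x, Real.sqrt (KLfin (fun y => P₁ x y) (fun y => P₂ x y))) * supNorm v := by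
  have hP₂ := norm_mulVec_le_of_rowStochastic P₂ h2pos h2sum
  refine ⟨isUnit_one_sub_smul hP₂ hγ0 hγ1, fun v => ?_⟩
  set K := ⨆ x, √(KLfin (fun y => P₁ x y) (fun y => P₂ x y))
  have hK : ∀ x, √(KLfin (fun y => P₁ x y) (fun y => P₂ x y)) ≤ K :=
    le_ciSup (Set.finite_range _).bddAbove
  have hK0 : 0 ≤ K := (sqrt_nonneg _).trans (hK (Classical.arbitrary S))
  have hrow : ∀ x, ∑ y, |(γ • P₁ - γ • P₂) x y| ≤ γ * √2 * K := fun x => calc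
    ∑ y, |(γ • P₁ - γ • P₂) x y| = γ * ∑ y, |P₁ x y - P₂ x y| := by
      simp only [Matrix.sub_apply, Matrix.smul_apply, smul_eq_mul, ← mul_sub, abs_mul,
        abs_of_nonneg hγ0, mul_sum]
    _ ≤ γ * (√2 * √(KLfin (fun y => P₁ x y) (fun y => P₂ x y))) := by
      gcongr
      exact sum_abs_sub_le_sqrt_two_mul_sqrt_KLfin (h1pos x) (h2pos x) (h1sum x) (h2sum x)
        (hsupp x)
    _ ≤ γ * √2 * K := by rw [← mul_assoc]; gcongr; exact hK x
  rw [supNorm_eq_norm, supNorm_eq_norm]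
  calc ‖(1 - γ • P₂)⁻¹ *ᵥ ((γ • P₁ - γ • P₂) *ᵥ v)‖
      ≤ ‖(γ • P₁ - γ • P₂) *ᵥ v‖ / (1 - γ) := norm_inv_one_sub_smul_mulVec_le hP₂ hγ0 hγ1 _
    _ ≤ γ * √2 * K * ‖v‖ / (1 - γ) := by
      gcongr
      exact norm_mulVec_le_of_sum_abs_le _ (by positivity) hrow v
    _ = γ * √2 / (1 - γ) * K * ‖v‖ := by ring
end

section
/- Let β > 0 and b¹, b² ∈ ℝ^d. Suppose λ¹ maximizes D_{β,b¹} over ℝ^d and λ² maximizes D_{β,b²} over ℝ^d. Then ‖λ¹ − λ²‖₂ ≤ (2/β²)·‖b¹ − b²‖₂. -/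
open MeasureTheory

/-- Euclidean inner product on `ℝ^d`. -/
noncomputable def dotd {d : ℕ} (lam v : Fin d → ℝ) : ℝ := ∑ i, lam i * v i

/-- The log-normalizer `Λ_λ = log ∫ exp⟨λ, φ(z)⟩ dp̂(z)`. -/
noncomputable def LamZ {Z : Type*} [MeasurableSpace Z] (phat : Measure Z)
    {d : ℕ} (φ : Z → Fin d → ℝ) (lam : Fin d → ℝ) : ℝ :=
  Real.log (∫ z, Real.exp (dotd lam (φ z)) ∂phat)

/-- The `ℓ₂²`-regularized dual objective `D_{β,b}(λ) = ⟨λ,b⟩ − Λ_λ − (β²/4)‖λ‖₂²`. -/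
noncomputable def Dreg {Z : Type*} [MeasurableSpace Z] (phat : Measure Z)
    {d : ℕ} (φ : Z → Fin d → ℝ) (β : ℝ) (b lam : Fin d → ℝ) : ℝ :=
  dotd lam b - LamZ phat φ lam - (β ^ 2 / 4) * ∑ i, (lam i) ^ 2

/-! The penalty `-(β²/4)‖λ‖²` makes `D_{β,b}` a `β²/2`-strongly concave function, since the
log-partition function `Λ` is convex (Hölder's inequality, here in the form of convexity of `exp`
after normalizing both integrals to `1`), and `b` only enters through the linear term `⟨λ, b⟩`.
At the maximizer `x` of an `m`-strongly concave `f`, `f y + (m/2)‖y - x‖² ≤ f x`. Evaluating this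
for each objective at the other maximizer and adding the two inequalities cancels everything except
`m‖λ¹ - λ²‖² ≤ ⟨λ¹ - λ², b¹ - b²⟩`, and Cauchy–Schwarz gives `‖λ¹ - λ²‖ ≤ ‖b¹ - b²‖ / m`. -/

open Real Set Filter Topology WithLp
open scoped RealInnerProductSpace

section StrongConcavity

variable {E : Type*} [NormedAddCommGroup E] [NormedSpace ℝ E] {f : E → ℝ} {m : ℝ}

lemma StrongConcaveOn.add_sq_norm_sub_le_of_isMaxOn {x : E} (hf : StrongConcaveOn univ m f)
    (hx : IsMaxOn f univ x) (y : E) :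
    f y + m / 2 * ‖y - x‖ ^ 2 ≤ f x := by
  set Q := m / 2 * ‖y - x‖ ^ 2
  have hchord : ∀ t ∈ Ioo (0 : ℝ) 1, f y + (1 - t) * Q ≤ f x := by
    rintro t ⟨ht0, ht1⟩
    have hconc : t * f y + (1 - t) * f x + t * (1 - t) * Q ≤ f (t • y + (1 - t) • x) :=
      hf.2 (mem_univ y) (mem_univ x) ht0.le (sub_nonneg.2 ht1.le) (by ring)
    have hmax : f (t • y + (1 - t) • x) ≤ f x := hx (mem_univ _)
    have : t * (f y + (1 - t) * Q) ≤ t * f x := by linarith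
    exact le_of_mul_le_mul_left this ht0
  have hlim : Tendsto (fun t : ℝ => f y + (1 - t) * Q) (𝓝[>] 0) (𝓝 (f y + (1 - 0) * Q)) :=
    (Continuous.tendsto (by fun_prop) 0).mono_left nhdsWithin_le_nhds
  simpa using le_of_tendsto hlim (eventually_of_mem (Ioo_mem_nhdsGT zero_lt_one) hchord)

end StrongConcavity

section StrongConcavityInner

variable {E : Type*} [NormedAddCommGroup E] [InnerProductSpace ℝ E] {f : E → ℝ} {m : ℝ}

lemma StrongConcaveOn.inner_add (hf : StrongConcaveOn univ m f) (b : E) :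
    StrongConcaveOn univ m fun x => ⟪b, x⟫ + f x := by
  have h := (uniformConcaveOn_zero.2 ((innerₛₗ ℝ b).concaveOn convex_univ)).add hf
  rw [zero_add] at h
  exact h

lemma StrongConcaveOn.mul_norm_sub_le_of_isMaxOn_inner_add (hf : StrongConcaveOn univ m f)
    {b₁ b₂ x₁ x₂ : E} (h₁ : IsMaxOn (fun x => ⟪b₁, x⟫ + f x) univ x₁)
    (h₂ : IsMaxOn (fun x => ⟪b₂, x⟫ + f x) univ x₂) :
    m * ‖x₁ - x₂‖ ≤ ‖b₁ - b₂‖ := by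
  have e₁ := (hf.inner_add b₁).add_sq_norm_sub_le_of_isMaxOn h₁ x₂
  have e₂ := (hf.inner_add b₂).add_sq_norm_sub_le_of_isMaxOn h₂ x₁
  have hcs := real_inner_le_norm (b₁ - b₂) (x₁ - x₂)
  rw [norm_sub_rev x₂] at e₁
  simp only [inner_sub_left, inner_sub_right] at hcs
  have hsq : m * ‖x₁ - x₂‖ * ‖x₁ - x₂‖ ≤ ‖b₁ - b₂‖ * ‖x₁ - x₂‖ := by nlinarith
  rcases (norm_nonneg (x₁ - x₂)).eq_or_lt with h | h
  · rw [← h, mul_zero]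
    exact norm_nonneg _
  · exact le_of_mul_le_mul_right hsq h

end StrongConcavityInner

lemma log_integral_exp_mul_add_mul_le {Z : Type*} [MeasurableSpace Z] {μ : Measure Z} [NeZero μ]
    {A B : Z → ℝ} {a b : ℝ} (hA : Integrable (fun z => exp (A z)) μ)
    (hB : Integrable (fun z => exp (B z)) μ)
    (hAB : Integrable (fun z => exp (a * A z + b * B z)) μ) (ha : 0 ≤ a) (hb : 0 ≤ b)
    (hab : a + b = 1) :
    log (∫ z, exp (a * A z + b * B z) ∂μ) ≤
      a * log (∫ z, exp (A z) ∂μ) + b * log (∫ z, exp (B z) ∂μ) := by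
  set IA := ∫ z, exp (A z) ∂μ
  set IB := ∫ z, exp (B z) ∂μ
  have hIA : 0 < IA := integral_exp_pos hA
  have hIB : 0 < IB := integral_exp_pos hB
  set c := a * log IA + b * log IB
  have hpt : ∀ z, exp (a * A z + b * B z) ≤
      exp c * (a * (exp (A z) / IA) + b * (exp (B z) / IB)) := fun z => by
    have h := convexOn_exp.2 (mem_univ (A z - log IA)) (mem_univ (B z - log IB)) ha hb hab
    simp only [smul_eq_mul, exp_sub, exp_log hIA, exp_log hIB] at h
    calc exp (a * A z + b * B z) = exp c * exp (a * (A z - log IA) + b * (B z - log IB)) := by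
          rw [← exp_add]; congr 1; ring
      _ ≤ _ := mul_le_mul_of_nonneg_left h (exp_pos c).le
  rw [log_le_iff_le_exp (integral_exp_pos hAB)]
  calc ∫ z, exp (a * A z + b * B z) ∂μ
      ≤ ∫ z, exp c * (a * (exp (A z) / IA) + b * (exp (B z) / IB)) ∂μ :=
        integral_mono hAB (((hA.div_const _).const_mul a).add
          ((hB.div_const _).const_mul b) |>.const_mul _) hpt
    _ = exp c * (a * (IA / IA) + b * (IB / IB)) := by
        rw [integral_const_mul, integral_add ((hA.div_const _).const_mul a)
          ((hB.div_const _).const_mul b), integral_const_mul, integral_const_mul,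
          integral_div, integral_div]
    _ = exp c := by rw [div_self hIA.ne', div_self hIB.ne', mul_one, mul_one, hab, mul_one]

section LogPartition

variable {Z : Type*} [MeasurableSpace Z] {μ : Measure Z} {d : ℕ} {φ : Z → Fin d → ℝ} {C : ℝ}

lemma dotd_eq_dotProduct (x v : Fin d → ℝ) : dotd x v = x ⬝ᵥ v := rfl

lemma integrable_exp_dotProduct [IsFiniteMeasure μ] (hφm : Measurable φ)
    (hφb : ∀ z i, |φ z i| ≤ C) (x : Fin d → ℝ) :
    Integrable (fun z => exp (x ⬝ᵥ φ z)) μ := by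
  refine .of_bound (by fun_prop) (exp (∑ i, |x i| * C)) (ae_of_all _ fun z => ?_)
  rw [norm_of_nonneg (exp_pos _).le, exp_le_exp]
  calc x ⬝ᵥ φ z ≤ ∑ i, |x i * φ z i| := (le_abs_self _).trans (Finset.abs_sum_le_sum_abs _ _)
    _ ≤ ∑ i, |x i| * C := Finset.sum_le_sum fun i _ => by
        rw [abs_mul]; exact mul_le_mul_of_nonneg_left (hφb z i) (abs_nonneg _)

lemma convexOn_LamZ [IsFiniteMeasure μ] [NeZero μ] (hφm : Measurable φ)
    (hφb : ∀ z i, |φ z i| ≤ C) : ConvexOn ℝ univ (LamZ μ φ) := by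
  refine ⟨convex_univ, fun x _ y _ a b ha hb hab => ?_⟩
  have hlin : ∀ z, (a • x + b • y) ⬝ᵥ φ z = a * (x ⬝ᵥ φ z) + b * (y ⬝ᵥ φ z) := fun z => by
    rw [add_dotProduct, smul_dotProduct, smul_dotProduct, smul_eq_mul, smul_eq_mul]
  have hint := integrable_exp_dotProduct (μ := μ) hφm hφb (a • x + b • y)
  simp only [hlin] at hint
  simp only [LamZ, dotd_eq_dotProduct, hlin, smul_eq_mul]
  exact log_integral_exp_mul_add_mul_le (integrable_exp_dotProduct hφm hφb x)
    (integrable_exp_dotProduct hφm hφb y) hint ha hb hab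

end LogPartition

section DualObjective

variable {Z : Type*} [MeasurableSpace Z] {μ : Measure Z} {d : ℕ} {φ : Z → Fin d → ℝ}

lemma Dreg_eq_inner_add (β : ℝ) (b : Fin d → ℝ) (x : EuclideanSpace ℝ (Fin d)) :
    Dreg μ φ β b x.ofLp = ⟪toLp 2 b, x⟫ + (-LamZ μ φ x.ofLp - β ^ 2 / 4 * ‖x‖ ^ 2) := by
  rw [EuclideanSpace.real_norm_sq_eq, EuclideanSpace.inner_eq_star_dotProduct, star_trivial,
    Dreg, dotd_eq_dotProduct]
  ring

lemma strongConcaveOn_neg_LamZ_sub [IsFiniteMeasure μ] [NeZero μ] (hφm : Measurable φ) {C : ℝ}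
    (hφb : ∀ z i, |φ z i| ≤ C) (β : ℝ) :
    StrongConcaveOn univ (β ^ 2 / 2)
      fun x : EuclideanSpace ℝ (Fin d) => -LamZ μ φ x.ofLp - β ^ 2 / 4 * ‖x‖ ^ 2 := by
  have hshift : (fun x : EuclideanSpace ℝ (Fin d) =>
      -LamZ μ φ x.ofLp - β ^ 2 / 4 * ‖x‖ ^ 2 + β ^ 2 / 2 / 2 * ‖x‖ ^ 2) =
      fun x => -LamZ μ φ x.ofLp := by
    funext x
    ring
  rw [strongConcaveOn_iff_convex, hshift]
  have hconv := (convexOn_LamZ (μ := μ) hφm hφb).comp_linearMap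
    (WithLp.linearEquiv 2 ℝ (Fin d → ℝ)).toLinearMap
  rw [preimage_univ] at hconv
  exact hconv.neg

end DualObjective

theorem stmt7 {Z : Type*} [MeasurableSpace Z] (phat : Measure Z) [IsProbabilityMeasure phat]
    {d : ℕ} (φ : Z → Fin d → ℝ) (hφm : Measurable φ)
    (C : ℝ) (hφb : ∀ z i, |φ z i| ≤ C)
    (β : ℝ) (hβ : 0 < β) (b₁ b₂ : Fin d → ℝ) (lam1 lam2 : Fin d → ℝ)
    (hmax₁ : ∀ lam, Dreg phat φ β b₁ lam ≤ Dreg phat φ β b₁ lam1)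
    (hmax₂ : ∀ lam, Dreg phat φ β b₂ lam ≤ Dreg phat φ β b₂ lam2) :
    Real.sqrt (∑ i, (lam1 i - lam2 i) ^ 2) ≤
      (2 / β ^ 2) * Real.sqrt (∑ i, (b₁ i - b₂ i) ^ 2) := by
  have isMaxOn_of_forall_le {b lam : Fin d → ℝ}
      (h : ∀ lam', Dreg phat φ β b lam' ≤ Dreg phat φ β b lam) :
      IsMaxOn (fun x => ⟪toLp 2 b, x⟫ + (-LamZ phat φ x.ofLp - β ^ 2 / 4 * ‖x‖ ^ 2)) univ
        (toLp 2 lam) := fun x _ => by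
    have hx := h x.ofLp
    rw [Dreg_eq_inner_add] at hx
    exact hx.trans_eq (Dreg_eq_inner_add β b (toLp 2 lam))
  have key := (strongConcaveOn_neg_LamZ_sub hφm hφb β).mul_norm_sub_le_of_isMaxOn_inner_add
    (isMaxOn_of_forall_le hmax₁) (isMaxOn_of_forall_le hmax₂)
  rw [← toLp_sub, ← toLp_sub, EuclideanSpace.norm_eq, EuclideanSpace.norm_eq] at key
  simp only [Pi.sub_apply, norm_eq_abs, sq_abs] at key
  rw [div_mul_eq_mul_div, le_div_iff₀ (by positivity)]
  linarith
end

section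
/- Let p be a probability measure on Z absolutely continuous with respect to p̂ with KL(p‖p̂) < ∞, let β > 0 and b ∈ ℝ^d, and let λ* be a maximizer of D_{β,b} over ℝ^d. Then for every λ ∈ ℝ^d: KL(p‖q_{λ*}) ≤ KL(p‖q_λ) + (2/β²)·‖∫ φ dp − b‖₂² + (β²/4)·‖λ‖₂². -/
open MeasureTheory

/-- The Gibbs tilt `q_λ` of `p̂`: the measure with density
`z ↦ exp(⟨λ, φ(z)⟩ − Λ_λ)` with respect to `p̂`. -/
noncomputable def gibbs {Z : Type*} [MeasurableSpace Z] (phat : Measure Z)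
    {d : ℕ} (φ : Z → Fin d → ℝ) (lam : Fin d → ℝ) : Measure Z :=
  phat.withDensity (fun z => ENNReal.ofReal (Real.exp (dotd lam (φ z) - LamZ phat φ lam)))

/-- Kullback–Leibler divergence `KL(p‖q) = ∫ log (dp/dq) dp`. -/
noncomputable def KLm {Z : Type*} [MeasurableSpace Z] (p q : Measure Z) : ℝ :=
  ∫ z, Real.log ((p.rnDeriv q z).toReal) ∂p

/-!
Writing `μ = ∫ φ dp`, the tilt satisfies `KL(p‖q_λ) = KL(p‖p̂) − ⟨λ, μ⟩ + Λ_λ`, so only `Λ` has to be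
compared at `λ*` and `λ`. By Cauchy–Schwarz `Λ` is midpoint convex, hence `D_{β,b}` is strongly
concave and optimality of `λ*` against the midpoint of `λ` and `λ*` gives
`D(λ) + (β²/8)‖λ* − λ‖² ≤ D(λ*)`. What remains is the cross term `⟨λ* − λ, b − μ⟩`, which Young's
inequality bounds by `(β²/8)‖λ* − λ‖² + (2/β²)‖μ − b‖²`.
-/

open Real

lemma abs_dotd_le {d : ℕ} {C : ℝ} (ν v : Fin d → ℝ) (hv : ∀ i, |v i| ≤ C) :
    |dotd ν v| ≤ C * ∑ i, |ν i| := by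
  rw [Finset.mul_sum]
  refine (Finset.abs_sum_le_sum_abs _ _).trans (Finset.sum_le_sum fun i _ => ?_)
  rw [abs_mul, mul_comm C]
  exact mul_le_mul_of_nonneg_left (hv i) (abs_nonneg _)

lemma dotd_le_sum_sq {d : ℕ} {ε : ℝ} (hε : 0 < ε) (w v : Fin d → ℝ) :
    dotd w v ≤ ε / 2 * ∑ i, w i ^ 2 + 1 / (2 * ε) * ∑ i, v i ^ 2 := by
  rw [dotd, Finset.mul_sum, Finset.mul_sum, ← Finset.sum_add_distrib]
  refine Finset.sum_le_sum fun i _ => ?_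
  have hsq : 0 ≤ (ε * w i - v i) ^ 2 / (2 * ε) := by positivity
  have hexp : (ε * w i - v i) ^ 2 / (2 * ε)
      = ε / 2 * w i ^ 2 + 1 / (2 * ε) * v i ^ 2 - w i * v i := by
    field_simp
    ring
  linarith

lemma log_integral_exp_midpoint_le {α : Type*} [MeasurableSpace α] {μ : Measure α} [NeZero μ]
    {f g : α → ℝ} (hf : AEMeasurable f μ) (hg : AEMeasurable g μ)
    (hfi : Integrable (fun x => exp (f x)) μ) (hgi : Integrable (fun x => exp (g x)) μ) :
    log (∫ x, exp ((f x + g x) / 2) ∂μ) ≤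
      (log (∫ x, exp (f x) ∂μ) + log (∫ x, exp (g x) ∂μ)) / 2 := by
  have hsq : ∀ a : ℝ, exp (a / 2) ^ 2 = exp a := fun a => by rw [← exp_nat_mul]; ring_nf
  have hL2 : ∀ h : α → ℝ, AEMeasurable h μ → Integrable (fun x => exp (h x)) μ →
      MemLp (fun x => exp (h x / 2)) 2 μ := fun h hm hi => by
    rw [memLp_two_iff_integrable_sq]
    · simpa only [hsq] using hi
    · exact (measurable_exp.comp_aemeasurable (hm.div_const 2)).aestronglyMeasurable
  have hmid : ∀ x, exp (f x / 2) * exp (g x / 2) = exp ((f x + g x) / 2) := fun x => by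
    rw [← exp_add, add_div]
  have hCS := integral_mul_le_Lp_mul_Lq_of_nonneg HolderConjugate.two_two
    (ae_of_all μ fun x => (exp_pos (f x / 2)).le) (ae_of_all μ fun x => (exp_pos (g x / 2)).le)
    (by rw [ENNReal.ofReal_ofNat]; exact hL2 f hf hfi)
    (by rw [ENNReal.ofReal_ofNat]; exact hL2 g hg hgi)
  simp only [hmid, rpow_two, hsq] at hCS
  have hpos : 0 < ∫ x, exp ((f x + g x) / 2) ∂μ := by
    refine integral_exp_pos ?_
    simpa only [Pi.mul_def, hmid] using (hL2 f hf hfi).integrable_mul (hL2 g hg hgi)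
  have hf0 := integral_exp_pos hfi
  have hg0 := integral_exp_pos hgi
  calc log (∫ x, exp ((f x + g x) / 2) ∂μ)
      ≤ log ((∫ x, exp (f x) ∂μ) ^ (1 / 2 : ℝ) * (∫ x, exp (g x) ∂μ) ^ (1 / 2 : ℝ)) :=
        log_le_log hpos hCS
    _ = _ := by
        rw [log_mul (rpow_pos_of_pos hf0 _).ne' (rpow_pos_of_pos hg0 _).ne', log_rpow hf0,
          log_rpow hg0]
        ring

section BoundedFeatures

variable {Z : Type*} [MeasurableSpace Z] {d : ℕ} {φ : Z → Fin d → ℝ} {C : ℝ}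

lemma integrable_coord_of_bounded (μ : Measure Z) [IsFiniteMeasure μ] (hφm : Measurable φ)
    (hφb : ∀ z i, |φ z i| ≤ C) (i : Fin d) : Integrable (fun z => φ z i) μ :=
  .of_bound ((measurable_pi_apply i).comp hφm).aestronglyMeasurable C
    (ae_of_all μ fun z => hφb z i)

lemma integrable_dotd_of_bounded (μ : Measure Z) [IsFiniteMeasure μ] (hφm : Measurable φ)
    (hφb : ∀ z i, |φ z i| ≤ C) (ν : Fin d → ℝ) : Integrable (fun z => dotd ν (φ z)) μ :=
  integrable_finsetSum _ fun i _ => (integrable_coord_of_bounded μ hφm hφb i).const_mul (ν i)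

lemma integrable_exp_dotd_of_bounded (μ : Measure Z) [IsFiniteMeasure μ] (hφm : Measurable φ)
    (hφb : ∀ z i, |φ z i| ≤ C) (ν : Fin d → ℝ) :
    Integrable (fun z => exp (dotd ν (φ z))) μ := by
  refine .of_bound (continuous_exp.comp_aestronglyMeasurable
    (integrable_dotd_of_bounded μ hφm hφb ν).aestronglyMeasurable) (exp (C * ∑ i, |ν i|))
    (ae_of_all μ fun z => ?_)
  rw [norm_of_nonneg (exp_pos _).le, exp_le_exp]
  exact (le_abs_self _).trans (abs_dotd_le ν (φ z) (hφb z))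

lemma integral_dotd (μ : Measure Z) (hφi : ∀ i, Integrable (fun z => φ z i) μ)
    (ν : Fin d → ℝ) : ∫ z, dotd ν (φ z) ∂μ = dotd ν (fun i => ∫ z, φ z i ∂μ) := by
  simp only [dotd]
  rw [integral_finsetSum _ fun i _ => (hφi i).const_mul _]
  simp only [integral_const_mul]

lemma gibbs_eq_tilted (phat : Measure Z) [NeZero phat] (ν : Fin d → ℝ)
    (hν : Integrable (fun z => exp (dotd ν (φ z))) phat) :
    gibbs phat φ ν = phat.tilted fun z => dotd ν (φ z) := by
  simp only [gibbs, Measure.tilted, LamZ, exp_sub, exp_log (integral_exp_pos hν)]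

lemma KLm_gibbs (phat : Measure Z) [IsProbabilityMeasure phat] (hφm : Measurable φ)
    (hφb : ∀ z i, |φ z i| ≤ C) (p : Measure Z) [IsProbabilityMeasure p] (hac : p ≪ phat)
    (hKL : Integrable (llr p phat) p) (ν : Fin d → ℝ) :
    KLm p (gibbs phat φ ν) = KLm p phat - dotd ν (fun i => ∫ z, φ z i ∂p) + LamZ phat φ ν := by
  have hexp := integrable_exp_dotd_of_bounded phat hφm hφb ν
  rw [gibbs_eq_tilted phat ν hexp, ← integral_dotd p (integrable_coord_of_bounded p hφm hφb)]
  exact integral_llr_tilted_right hac (integrable_dotd_of_bounded p hφm hφb ν) hexp hKL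

lemma LamZ_midpoint_le (phat : Measure Z) [IsProbabilityMeasure phat] (hφm : Measurable φ)
    (hφb : ∀ z i, |φ z i| ≤ C) (ν ν' : Fin d → ℝ) :
    LamZ phat φ (fun i => (ν i + ν' i) / 2) ≤ (LamZ phat φ ν + LamZ phat φ ν') / 2 := by
  have hmid : ∀ z, dotd (fun i => (ν i + ν' i) / 2) (φ z) = (dotd ν (φ z) + dotd ν' (φ z)) / 2 :=
    fun z => by
      simp only [dotd, ← Finset.sum_add_distrib, Finset.sum_div, add_mul, add_div,
        div_mul_eq_mul_div]
  simp only [LamZ, hmid]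
  exact log_integral_exp_midpoint_le
    (integrable_dotd_of_bounded phat hφm hφb ν).aemeasurable
    (integrable_dotd_of_bounded phat hφm hφb ν').aemeasurable
    (integrable_exp_dotd_of_bounded phat hφm hφb ν) (integrable_exp_dotd_of_bounded phat hφm hφb ν')

end BoundedFeatures

lemma Dreg_add_sq_le_of_Dreg_midpoint_le {Z : Type*} [MeasurableSpace Z] (phat : Measure Z)
    {d : ℕ} (φ : Z → Fin d → ℝ) (β : ℝ) (b lam lamStar : Fin d → ℝ)
    (hconv : LamZ phat φ (fun i => (lam i + lamStar i) / 2) ≤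
      (LamZ phat φ lam + LamZ phat φ lamStar) / 2)
    (hmid : Dreg phat φ β b (fun i => (lam i + lamStar i) / 2) ≤ Dreg phat φ β b lamStar) :
    Dreg phat φ β b lam + β ^ 2 / 8 * ∑ i, (lamStar i - lam i) ^ 2 ≤ Dreg phat φ β b lamStar := by
  have hlin : dotd (fun i => (lam i + lamStar i) / 2) b = (dotd lam b + dotd lamStar b) / 2 := by
    simp only [dotd, ← Finset.sum_add_distrib, Finset.sum_div]
    exact Finset.sum_congr rfl fun i _ => by ring
  have hsq : ∑ i, ((lam i + lamStar i) / 2) ^ 2 =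
      (∑ i, lam i ^ 2 + ∑ i, lamStar i ^ 2) / 2 - (∑ i, (lamStar i - lam i) ^ 2) / 4 := by
    simp only [← Finset.sum_add_distrib, Finset.sum_div, ← Finset.sum_sub_distrib]
    exact Finset.sum_congr rfl fun i _ => by ring
  simp only [Dreg, hlin, hsq] at hmid ⊢
  linarith

theorem stmt9 {Z : Type*} [MeasurableSpace Z] (phat : Measure Z) [IsProbabilityMeasure phat]
    {d : ℕ} (φ : Z → Fin d → ℝ) (hφm : Measurable φ)
    (C : ℝ) (hφb : ∀ z i, |φ z i| ≤ C)
    (p : Measure Z) [IsProbabilityMeasure p] (hac : p ≪ phat)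
    (hKLfin : Integrable (fun z => Real.log ((p.rnDeriv phat z).toReal)) p)
    (β : ℝ) (hβ : 0 < β) (b : Fin d → ℝ) (lamStar : Fin d → ℝ)
    (hmax : ∀ lam, Dreg phat φ β b lam ≤ Dreg phat φ β b lamStar) :
    ∀ lam : Fin d → ℝ,
      KLm p (gibbs phat φ lamStar) ≤
        KLm p (gibbs phat φ lam) +
          (2 / β ^ 2) * (∑ i, ((∫ z, φ z i ∂p) - b i) ^ 2) +
          (β ^ 2 / 4) * ∑ i, (lam i) ^ 2 := by
  intro lam
  rw [KLm_gibbs phat hφm hφb p hac hKLfin, KLm_gibbs phat hφm hφb p hac hKLfin]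
  set μ : Fin d → ℝ := fun i => ∫ z, φ z i ∂p
  have hstrong := Dreg_add_sq_le_of_Dreg_midpoint_le phat φ β b lam lamStar
    (LamZ_midpoint_le phat hφm hφb lam lamStar) (hmax _)
  have hyoung := dotd_le_sum_sq (ε := β ^ 2 / 4) (by positivity) (lamStar - lam) (b - μ)
  have hbil : dotd (lamStar - lam) (b - μ) =
      dotd lamStar b - dotd lam b - (dotd lamStar μ - dotd lam μ) := by
    simp only [dotd, Pi.sub_apply, sub_mul, mul_sub, Finset.sum_sub_distrib]
  have hsymm : ∑ i, (b - μ) i ^ 2 = ∑ i, ((∫ z, φ z i ∂p) - b i) ^ 2 :=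
    Finset.sum_congr rfl fun i _ => by rw [Pi.sub_apply, sub_sq_comm]
  have hcoef : 1 / (2 * (β ^ 2 / 4)) = 2 / β ^ 2 := by field_simp; norm_num
  rw [hbil, hsymm, hcoef] at hyoung
  simp only [Dreg, Pi.sub_apply] at hstrong hyoung
  have hnorm : 0 ≤ β ^ 2 / 4 * ∑ i, lamStar i ^ 2 := by positivity
  linarith
end

section
/- Let p, p̄ be probability measures on Z, both absolutely continuous with respect to p̂ with KL(p‖p̂) < ∞ and KL(p̄‖p̂) < ∞, let φ = (φ₁,…,φ_d) : Z → ℝ^d be bounded measurable, β > 0, and ψ ∈ ℝ^d. Assume KL(p̄‖p̂) + (1/β²)·‖∫ φ dp̄ − ψ‖₂² ≤ KL(p‖p̂) + (1/β²)·‖∫ φ dp − ψ‖₂². Then ∑_{i=1}^d |∫ φᵢ dp̄ − ∫ φᵢ dp| ≤ √d · (2·‖∫ φ dp − ψ‖₂ + β·√(KL(p‖p̂))). -/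
/-! Gibbs' inequality KL(p̄‖p̂) ≥ 0 turns the hypothesis into ‖m̄ - ψ‖² ≤ ‖m - ψ‖² + β² KL(p‖p̂) for the
mean vectors m̄ = ∫ φ dp̄ and m = ∫ φ dp, hence ‖m̄ - ψ‖ ≤ ‖m - ψ‖ + β √KL(p‖p̂). The triangle
inequality through ψ bounds ‖m̄ - m‖₂ by 2 ‖m - ψ‖ + β √KL(p‖p̂), and Cauchy–Schwarz gives
‖·‖₁ ≤ √d ‖·‖₂. -/

open MeasureTheory

open InformationTheory

lemma KLm_eq_toReal_klDiv {Z : Type*} [MeasurableSpace Z] {p q : Measure Z}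
    [IsFiniteMeasure p] [IsFiniteMeasure q] (hpq : p ≪ q) (h_univ : p Set.univ = q Set.univ) :
    KLm p q = (klDiv p q).toReal :=
  (toReal_klDiv_of_measure_eq hpq h_univ).symm

lemma KLm_nonneg {Z : Type*} [MeasurableSpace Z] {p q : Measure Z}
    [IsProbabilityMeasure p] [IsProbabilityMeasure q] (hpq : p ≪ q) : 0 ≤ KLm p q := by
  rw [KLm_eq_toReal_klDiv hpq (by simp)]
  exact ENNReal.toReal_nonneg

lemma Real.sqrt_le_sqrt_add_mul_sqrt {A B K β : ℝ} (hB : 0 ≤ B) (hβ : 0 ≤ β)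
    (h : A ≤ B + β ^ 2 * K) : √A ≤ √B + β * √K := by
  rcases le_or_gt K 0 with hK | hK
  · rw [Real.sqrt_eq_zero'.2 hK, mul_zero, add_zero]
    exact Real.sqrt_le_sqrt (by nlinarith)
  · rw [Real.sqrt_le_iff]
    refine ⟨by positivity, ?_⟩
    nlinarith [Real.sq_sqrt hB, Real.sq_sqrt hK.le,
      mul_nonneg (mul_nonneg hβ (Real.sqrt_nonneg B)) (Real.sqrt_nonneg K)]

section EuclideanBounds

variable {ι : Type*} [Fintype ι]

lemma sum_abs_le_sqrt_card_mul_sqrt_sum_sq (x : ι → ℝ) :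
    ∑ i, |x i| ≤ √(Fintype.card ι) * √(∑ i, x i ^ 2) := by
  simpa using Real.sum_mul_le_sqrt_mul_sqrt Finset.univ (fun _ ↦ 1) (fun i ↦ |x i|)

lemma sqrt_sum_sq_sub_le (a b : ι → ℝ) :
    √(∑ i, (a i - b i) ^ 2) ≤ √(∑ i, a i ^ 2) + √(∑ i, b i ^ 2) := by
  simpa [EuclideanSpace.norm_eq] using
    norm_sub_le (WithLp.toLp 2 a : EuclideanSpace ℝ ι) (WithLp.toLp 2 b)

lemma sum_abs_sub_le_of_penalized_le (a b : ι → ℝ) {K K' β : ℝ}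
    (hK' : 0 ≤ K') (hβ : 0 < β)
    (h : K' + 1 / β ^ 2 * ∑ i, a i ^ 2 ≤ K + 1 / β ^ 2 * ∑ i, b i ^ 2) :
    ∑ i, |a i - b i| ≤ √(Fintype.card ι) * (2 * √(∑ i, b i ^ 2) + β * √K) := by
  have hsq : ∑ i, a i ^ 2 ≤ ∑ i, b i ^ 2 + β ^ 2 * K := by
    have := mul_le_mul_of_nonneg_left h (sq_nonneg β)
    field_simp at this
    nlinarith [sq_nonneg β]
  have hnorm : √(∑ i, a i ^ 2) ≤ √(∑ i, b i ^ 2) + β * √K :=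
    Real.sqrt_le_sqrt_add_mul_sqrt (by positivity) hβ.le hsq
  calc ∑ i, |a i - b i| ≤ √(Fintype.card ι) * √(∑ i, (a i - b i) ^ 2) :=
        sum_abs_le_sqrt_card_mul_sqrt_sum_sq _
    _ ≤ √(Fintype.card ι) * (√(∑ i, a i ^ 2) + √(∑ i, b i ^ 2)) := by
        gcongr; exact sqrt_sum_sq_sub_le a b
    _ ≤ √(Fintype.card ι) * (2 * √(∑ i, b i ^ 2) + β * √K) :=
        mul_le_mul_of_nonneg_left (by linarith) (Real.sqrt_nonneg _)

end EuclideanBounds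

theorem stmt11_general {Z : Type*} [MeasurableSpace Z] (phat : Measure Z) [IsProbabilityMeasure phat]
    {d : ℕ} (φ : Z → Fin d → ℝ)
    (p pbar : Measure Z) [IsProbabilityMeasure pbar]
    (hacpbar : pbar ≪ phat)
    (β : ℝ) (hβ : 0 < β) (ψ : Fin d → ℝ)
    (hobj : KLm pbar phat + (1 / β ^ 2) * (∑ i, ((∫ z, φ z i ∂pbar) - ψ i) ^ 2) ≤
      KLm p phat + (1 / β ^ 2) * (∑ i, ((∫ z, φ z i ∂p) - ψ i) ^ 2)) :
    ∑ i, |(∫ z, φ z i ∂pbar) - ∫ z, φ z i ∂p| ≤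
      Real.sqrt d *
        (2 * Real.sqrt (∑ i, ((∫ z, φ z i ∂p) - ψ i) ^ 2) +
          β * Real.sqrt (KLm p phat)) := by
  have key := sum_abs_sub_le_of_penalized_le (fun i ↦ (∫ z, φ z i ∂pbar) - ψ i)
    (fun i ↦ (∫ z, φ z i ∂p) - ψ i) (KLm_nonneg hacpbar) hβ hobj
  simpa only [sub_sub_sub_cancel_right, Fintype.card_fin] using key

theorem stmt11 {Z : Type*} [MeasurableSpace Z] (phat : Measure Z) [IsProbabilityMeasure phat]
    {d : ℕ} (φ : Z → Fin d → ℝ) (hφm : Measurable φ)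
    (C : ℝ) (hφb : ∀ z i, |φ z i| ≤ C)
    (p pbar : Measure Z) [IsProbabilityMeasure p] [IsProbabilityMeasure pbar]
    (hacp : p ≪ phat) (hacpbar : pbar ≪ phat)
    (hKLfinp : Integrable (fun z => Real.log ((p.rnDeriv phat z).toReal)) p)
    (hKLfinpbar : Integrable (fun z => Real.log ((pbar.rnDeriv phat z).toReal)) pbar)
    (β : ℝ) (hβ : 0 < β) (ψ : Fin d → ℝ)
    (hobj : KLm pbar phat + (1 / β ^ 2) * (∑ i, ((∫ z, φ z i ∂pbar) - ψ i) ^ 2) ≤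
      KLm p phat + (1 / β ^ 2) * (∑ i, ((∫ z, φ z i ∂p) - ψ i) ^ 2)) :
    ∑ i, |(∫ z, φ z i ∂pbar) - ∫ z, φ z i ∂p| ≤
      Real.sqrt d *
        (2 * Real.sqrt (∑ i, ((∫ z, φ z i ∂p) - ψ i) ^ 2) +
          β * Real.sqrt (KLm p phat)) :=
  stmt11_general phat φ p pbar hacpbar β hβ ψ hobj
end

section
/- Let P, P̄ ∈ ℝ^{S×S} be row-stochastic matrices, γ ∈ [0,1), r ∈ ℝ^S, φ₁,…,φ_d : S → ℝ, εM, εQ ≥ 0, and β > 0. Assume for every x ∈ S: (i) ∑_y |P(x,y) − P̄(x,y)| ≤ √2·εM + (2/β)·εQ; (ii) ∑_{i=1}^d |(Pφᵢ)(x) − (P̄φᵢ)(x)| ≤ √d·(β·εM + 2·εQ), where (Pφ)(x) := ∑_y P(x,y)·φ(y). Set e₁ := (γ/(1−γ))·(√2·εM + (2/β)·εQ) and e₂ := (γ√d/(1−γ))·(β·εM + 2·εQ), and let V := (I − γP)⁻¹ r and V̄ := (I − γP̄)⁻¹ r. Then for every w ∈ ℝ^d: ‖V − V̄‖∞ ≤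 e₁·‖V − ∑_{i=1}^d wᵢφᵢ‖∞ + e₂·‖w‖∞. -/
/-!
Both values solve their Bellman equations, `V = r + γ P V` and `V̄ = r + γ P̄ V̄`, so
`V - V̄ = γ (P̄ (V - V̄) + (P - P̄)(V - Φ w) + (P - P̄) Φ w)` with `Φ w = ∑ᵢ wᵢ φᵢ`.
Hölder's inequality (ℓ¹ against ℓ^∞) bounds the three terms row by row by `‖V - V̄‖∞`,
`(√2 εM + (2/β) εQ) ‖V - Φ w‖∞` and `√d (β εM + 2 εQ) ‖w‖∞`, and the contraction
`‖V - V̄‖∞ ≤ γ ‖V - V̄‖∞ + a` gives `‖V - V̄‖∞ ≤ a / (1 - γ)`.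
-/

open Finset Matrix

section SupNorm

variable {S : Type*} [Fintype S]

lemma supNorm_le [Nonempty S] {v : S → ℝ} {c : ℝ} (h : ∀ x, |v x| ≤ c) : supNorm v ≤ c :=
  ciSup_le h

lemma le_supNorm (v : S → ℝ) (x : S) : |v x| ≤ supNorm v :=
  le_ciSup (f := fun x => |v x|) (Set.finite_range _).bddAbove x

lemma supNorm_nonneg (v : S → ℝ) : 0 ≤ supNorm v :=
  Real.iSup_nonneg fun _ => abs_nonneg _

lemma abs_sum_mul_le_sum_abs_mul_supNorm (a v : S → ℝ) :
    |∑ y, a y * v y| ≤ (∑ y, |a y|) * supNorm v :=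
  calc |∑ y, a y * v y| ≤ ∑ y, |a y| * |v y| := by
        simpa only [abs_mul] using abs_sum_le_sum_abs (fun y => a y * v y) univ
    _ ≤ ∑ y, |a y| * supNorm v :=
        sum_le_sum fun y _ => mul_le_mul_of_nonneg_left (le_supNorm v y) (abs_nonneg _)
    _ = (∑ y, |a y|) * supNorm v := (sum_mul ..).symm

lemma abs_sum_mul_le_supNorm_of_stochastic {p : S → ℝ} (hp0 : ∀ y, 0 ≤ p y)
    (hp1 : ∑ y, p y = 1) (v : S → ℝ) : |∑ y, p y * v y| ≤ supNorm v := by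
  have hp : ∑ y, |p y| = 1 := by simp only [abs_of_nonneg (hp0 _), hp1]
  simpa only [hp, one_mul] using abs_sum_mul_le_sum_abs_mul_supNorm p v

lemma supNorm_le_div_of_abs_le [Nonempty S] {v : S → ℝ} {γ a : ℝ} (hγ : γ < 1)
    (h : ∀ x, |v x| ≤ γ * supNorm v + a) : supNorm v ≤ a / (1 - γ) := by
  have := supNorm_le h
  rw [le_div_iff₀ (by linarith)]
  linarith

end SupNorm

section Bellman

variable {S : Type*} [Fintype S] [DecidableEq S]

lemma one_sub_smul_mulVec_apply (P : Matrix S S ℝ) (γ : ℝ) (v : S → ℝ) (x : S) :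
    ((1 - γ • P) *ᵥ v) x = v x - γ * ∑ y, P x y * v y := by
  simp only [sub_mulVec, one_mulVec, smul_mulVec, Pi.sub_apply, Pi.smul_apply, smul_eq_mul]
  rfl

variable [Nonempty S] {P : Matrix S S ℝ} {γ : ℝ}

-- A kernel vector satisfies `v = γ P v`, which the sup norm forces to vanish since `γ < 1`.
lemma isUnit_det_one_sub_smul (hP0 : ∀ x y, 0 ≤ P x y) (hP1 : ∀ x, ∑ y, P x y = 1)
    (hγ0 : 0 ≤ γ) (hγ1 : γ < 1) : IsUnit (1 - γ • P).det := by
  rw [isUnit_iff_ne_zero]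
  intro hdet
  obtain ⟨v, hv0, hv⟩ := exists_mulVec_eq_zero_iff.mpr hdet
  have hfix : ∀ x, |v x| ≤ γ * supNorm v + 0 := fun x => by
    have hx : v x = γ * ∑ y, P x y * v y := by
      have := congrFun hv x
      rw [one_sub_smul_mulVec_apply, Pi.zero_apply] at this
      linarith
    rw [hx, abs_mul, abs_of_nonneg hγ0, add_zero]
    exact mul_le_mul_of_nonneg_left
      (abs_sum_mul_le_supNorm_of_stochastic (hP0 x) (hP1 x) v) hγ0
  have hzero : supNorm v ≤ 0 := by simpa using supNorm_le_div_of_abs_le hγ1 hfix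
  exact hv0 (funext fun x => abs_nonpos_iff.mp ((le_supNorm v x).trans hzero))

lemma inv_one_sub_smul_mulVec_apply (hP0 : ∀ x y, 0 ≤ P x y) (hP1 : ∀ x, ∑ y, P x y = 1)
    (hγ0 : 0 ≤ γ) (hγ1 : γ < 1) (r : S → ℝ) (x : S) :
    ((1 - γ • P)⁻¹ *ᵥ r) x = r x + γ * ∑ y, P x y * ((1 - γ • P)⁻¹ *ᵥ r) y := by
  have h : (1 - γ • P) *ᵥ ((1 - γ • P)⁻¹ *ᵥ r) = r := by
    rw [mulVec_mulVec, mul_nonsing_inv _ (isUnit_det_one_sub_smul hP0 hP1 hγ0 hγ1),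
      one_mulVec]
  have hx := congrFun h x
  rw [one_sub_smul_mulVec_apply] at hx
  linarith

end Bellman

section Simulation

variable {S : Type*} [Fintype S] {d : ℕ}

lemma sum_mul_sub_sum_mul_eq (p q V Vbar : S → ℝ) (φ : Fin d → S → ℝ) (w : Fin d → ℝ) :
    ∑ y, p y * V y - ∑ y, q y * Vbar y =
      ∑ y, q y * (V y - Vbar y) + ∑ y, (p y - q y) * (V y - ∑ i, w i * φ i y) +
        ∑ i, w i * (∑ y, p y * φ i y - ∑ y, q y * φ i y) := by
  have hswap : ∑ i, w i * (∑ y, p y * φ i y - ∑ y, q y * φ i y) =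
      ∑ y, (p y - q y) * ∑ i, w i * φ i y := by
    simp only [← sum_sub_distrib, mul_sum]
    rw [sum_comm]
    exact sum_congr rfl fun y _ => sum_congr rfl fun i _ => by ring
  rw [hswap, ← sum_sub_distrib, ← sum_add_distrib, ← sum_add_distrib]
  exact sum_congr rfl fun y _ => by ring

-- One row of the simulation lemma: `p`, `q` are the rows of `P`, `P̄` at a fixed state.
lemma abs_sum_mul_sub_sum_mul_le {p q : S → ℝ} (hq0 : ∀ y, 0 ≤ q y) (hq1 : ∑ y, q y = 1)
    (V Vbar : S → ℝ) (φ : Fin d → S → ℝ) (w : Fin d → ℝ) {c₁ c₂ : ℝ}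
    (hTV : ∑ y, |p y - q y| ≤ c₁)
    (hφ : ∑ i, |∑ y, p y * φ i y - ∑ y, q y * φ i y| ≤ c₂) :
    |∑ y, p y * V y - ∑ y, q y * Vbar y| ≤
      supNorm (fun y => V y - Vbar y) + c₁ * supNorm (fun y => V y - ∑ i, w i * φ i y) +
        c₂ * supNorm w := by
  rw [sum_mul_sub_sum_mul_eq p q V Vbar φ w]
  have hstay := abs_sum_mul_le_supNorm_of_stochastic hq0 hq1 (fun y => V y - Vbar y)
  have happrox := abs_sum_mul_le_sum_abs_mul_supNorm (fun y => p y - q y)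
    (fun y => V y - ∑ i, w i * φ i y)
  have hfeat := abs_sum_mul_le_sum_abs_mul_supNorm
    (fun i => ∑ y, p y * φ i y - ∑ y, q y * φ i y) w
  simp only [mul_comm _ (w _)] at hfeat
  calc _ ≤ |∑ y, q y * (V y - Vbar y)| + |∑ y, (p y - q y) * (V y - ∑ i, w i * φ i y)| +
          |∑ i, w i * (∑ y, p y * φ i y - ∑ y, q y * φ i y)| := abs_add_three _ _ _
    _ ≤ _ := by
      gcongr
      · exact happrox.trans (mul_le_mul_of_nonneg_right hTV (supNorm_nonneg _))
      · exact hfeat.trans (mul_le_mul_of_nonneg_right hφ (supNorm_nonneg _))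

end Simulation

theorem stmt13_general {S : Type*} [Fintype S] [Nonempty S] [DecidableEq S]
    (P Pbar : Matrix S S ℝ) (γ : ℝ)
    (hP0 : ∀ x y, 0 ≤ P x y) (hP1 : ∀ x, ∑ y, P x y = 1)
    (hPbar0 : ∀ x y, 0 ≤ Pbar x y) (hPbar1 : ∀ x, ∑ y, Pbar x y = 1)
    (hγ0 : 0 ≤ γ) (hγ1 : γ < 1)
    (r : S → ℝ)
    (d : ℕ) (φ : Fin d → S → ℝ) (εM εQ β : ℝ)
    (hTV : ∀ x, ∑ y, |P x y - Pbar x y| ≤ Real.sqrt 2 * εM + (2 / β) * εQ)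
    (hQ : ∀ x, ∑ i : Fin d, |(∑ y, P x y * φ i y) - ∑ y, Pbar x y * φ i y| ≤
      Real.sqrt d * (β * εM + 2 * εQ))
    (e₁ e₂ : ℝ)
    (he₁ : e₁ = (γ / (1 - γ)) * (Real.sqrt 2 * εM + (2 / β) * εQ))
    (he₂ : e₂ = (γ * Real.sqrt d / (1 - γ)) * (β * εM + 2 * εQ))
    (V Vbar : S → ℝ)
    (hV : V = ((1 : Matrix S S ℝ) - γ • P)⁻¹.mulVec r)
    (hVbar : Vbar = ((1 : Matrix S S ℝ) - γ • Pbar)⁻¹.mulVec r) :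
    ∀ w : Fin d → ℝ,
      supNorm (fun x => V x - Vbar x) ≤
        e₁ * supNorm (fun x => V x - ∑ i, w i * φ i x) + e₂ * supNorm w := by
  intro w
  have hrow : ∀ x, |V x - Vbar x| ≤ γ * supNorm (fun x => V x - Vbar x) +
      γ * ((Real.sqrt 2 * εM + (2 / β) * εQ) * supNorm (fun x => V x - ∑ i, w i * φ i x) +
        Real.sqrt d * (β * εM + 2 * εQ) * supNorm w) := fun x => by
    have hbound := abs_sum_mul_sub_sum_mul_le (hPbar0 x) (hPbar1 x) V Vbar φ w (hTV x) (hQ x)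
    have hdiff : V x - Vbar x = γ * (∑ y, P x y * V y - ∑ y, Pbar x y * Vbar y) := by
      rw [hV, hVbar, inv_one_sub_smul_mulVec_apply hP0 hP1 hγ0 hγ1,
        inv_one_sub_smul_mulVec_apply hPbar0 hPbar1 hγ0 hγ1]
      ring
    rw [hdiff, abs_mul, abs_of_nonneg hγ0, ← mul_add, ← add_assoc]
    exact mul_le_mul_of_nonneg_left hbound hγ0
  refine (supNorm_le_div_of_abs_le hγ1 hrow).trans (le_of_eq ?_)
  rw [he₁, he₂]
  ring

theorem stmt13 {S : Type*} [Fintype S] [Nonempty S] [DecidableEq S]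
    (P Pbar : Matrix S S ℝ) (γ : ℝ)
    (hP0 : ∀ x y, 0 ≤ P x y) (hP1 : ∀ x, ∑ y, P x y = 1)
    (hPbar0 : ∀ x y, 0 ≤ Pbar x y) (hPbar1 : ∀ x, ∑ y, Pbar x y = 1)
    (hγ0 : 0 ≤ γ) (hγ1 : γ < 1)
    (r : S → ℝ)
    (d : ℕ) (φ : Fin d → S → ℝ) (εM εQ β : ℝ)
    (hεM : 0 ≤ εM) (hεQ : 0 ≤ εQ) (hβ : 0 < β)
    (hTV : ∀ x, ∑ y, |P x y - Pbar x y| ≤ Real.sqrt 2 * εM + (2 / β) * εQ)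
    (hQ : ∀ x, ∑ i : Fin d, |(∑ y, P x y * φ i y) - ∑ y, Pbar x y * φ i y| ≤
      Real.sqrt d * (β * εM + 2 * εQ))
    (e₁ e₂ : ℝ)
    (he₁ : e₁ = (γ / (1 - γ)) * (Real.sqrt 2 * εM + (2 / β) * εQ))
    (he₂ : e₂ = (γ * Real.sqrt d / (1 - γ)) * (β * εM + 2 * εQ))
    (V Vbar : S → ℝ)
    (hV : V = ((1 : Matrix S S ℝ) - γ • P)⁻¹.mulVec r)
    (hVbar : Vbar = ((1 : Matrix S S ℝ) - γ • Pbar)⁻¹.mulVec r) :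
    ∀ w : Fin d → ℝ,
      supNorm (fun x => V x - Vbar x) ≤
        e₁ * supNorm (fun x => V x - ∑ i, w i * φ i x) + e₂ * supNorm w :=
  stmt13_general P Pbar γ hP0 hP1 hPbar0 hPbar1 hγ0 hγ1 r d φ εM εQ β hTV hQ e₁ e₂ he₁ he₂ V Vbar hV
    hVbar
end

section
/- Let P, P̄ be transition kernels on S×A, r : S×A → ℝ, γ ∈ [0,1), φ₁,…,φ_d : S → ℝ, εM, εQ ≥ 0, and β > 0. Assume for every (x,a) ∈ S×A: (i) ∑_y |P(y|x,a) − P̄(y|x,a)| ≤ √2·εM + (2/β)·εQ; (ii) ∑_{i=1}^d |∑_y (P(y|x,a) − P̄(y|x,a))·φᵢ(y)| ≤ √d·(β·εM + 2·εQ). Set e₁ := (γ/(1−γ))·(√2·εM + (2/β)·εQ) and e₂ := (γ√d/(1−γ))·(β·εM + 2·εQ), and assume e₁ < 1. Let π* be an optimal deterministic policy for (r,P) and π̄* an optimal deterministic policy for (r,P̄). Then for every w ∈ ℝ^d: ‖V^{π*}(r,P) − V^{π̄*}(r,P)‖∞ ≤ (2e₁/(1−e₁))·‖V^{π*}(r,P)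 − ∑_{i=1}^d wᵢφᵢ‖∞ + (2e₂/(1−e₁))·‖w‖∞. -/
/-!
Optimality of `π*` for `P` and of `π̄*` for `P̄` gives pointwise
`0 ≤ V* - V^{π̄*} ≤ (V* - V̄^{π*}) + (V̄^{π̄*} - V^{π̄*})`, so the gap is at most two simulation
errors. For a fixed policy the Bellman equations give `V - V̄ = γ P̄ (V - V̄) + γ (P - P̄) V`,
hence `(1 - γ) ‖V - V̄‖ ≤ γ ‖(P - P̄) V‖`, and splitting `V = (V - Φw) + Φw` bounds
`‖(P - P̄) V‖` by hypothesis (i) times `‖V - Φw‖` plus hypothesis (ii) times `‖w‖`. For `π̄*` the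
error `‖V^{π̄*} - Φw‖` is at most the gap plus `‖V* - Φw‖`; as `e₁ < 1` the gap is absorbed.
-/

open Finset Matrix

/-- The row-stochastic matrix `P^μ` induced by a deterministic policy `μ`. -/
noncomputable def polMat {S A : Type*} (P : S → A → S → ℝ) (μ : S → A) : Matrix S S ℝ :=
  Matrix.of fun x y => P x (μ x) y

/-- The value function `V^μ(r,P) = (I - γ P^μ)⁻¹ r^μ` of a deterministic policy `μ`. -/
noncomputable def polVal {S A : Type*} [Fintype S] [DecidableEq S]
    (γ : ℝ) (r : S → A → ℝ) (P : S → A → S → ℝ) (μ : S → A) : S → ℝ :=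
  ((1 : Matrix S S ℝ) - γ • polMat P μ)⁻¹.mulVec (fun x => r x (μ x))

section SupNorm

variable {ι : Type*} [Fintype ι]

theorem supNorm_eq_norm_s14 (v : ι → ℝ) : supNorm v = ‖v‖ := by
  refine le_antisymm (Real.iSup_le (fun i => norm_le_pi_norm v i) (norm_nonneg v)) ?_
  refine (pi_norm_le_iff_of_nonneg (Real.iSup_nonneg fun i => abs_nonneg (v i))).2 fun i => ?_
  exact le_ciSup (Set.finite_range fun i => |v i|).bddAbove i

theorem abs_dotProduct_le_sum_abs_mul_norm (u v : ι → ℝ) : |u ⬝ᵥ v| ≤ (∑ i, |u i|) * ‖v‖ :=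
  calc |u ⬝ᵥ v| ≤ ∑ i, |u i| * |v i| :=
        (abs_sum_le_sum_abs (fun i => u i * v i) univ).trans_eq (by simp only [abs_mul])
    _ ≤ ∑ i, |u i| * ‖v‖ := sum_le_sum fun i _ =>
        mul_le_mul_of_nonneg_left (norm_le_pi_norm v i) (abs_nonneg _)
    _ = (∑ i, |u i|) * ‖v‖ := (sum_mul ..).symm

theorem abs_dotProduct_le_of_approx {κ : Type*} [Fintype κ] (D v : ι → ℝ) (φ : κ → ι → ℝ)
    (w : κ → ℝ) :
    |D ⬝ᵥ v| ≤ (∑ y, |D y|) * ‖v - fun y => ∑ i, w i * φ i y‖ + (∑ i, |D ⬝ᵥ φ i|) * ‖w‖ := by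
  have hfeat : (fun i => D ⬝ᵥ φ i) ⬝ᵥ w = D ⬝ᵥ fun y => ∑ i, w i * φ i y := by
    simp only [dotProduct, mul_sum, sum_mul]
    rw [sum_comm]
    exact sum_congr rfl fun _ _ => sum_congr rfl fun _ _ => by ring
  rw [← sub_add_cancel (D ⬝ᵥ v) (D ⬝ᵥ fun y => ∑ i, w i * φ i y), ← dotProduct_sub, ← hfeat]
  exact (abs_add_le _ _).trans (add_le_add (abs_dotProduct_le_sum_abs_mul_norm _ _)
    (abs_dotProduct_le_sum_abs_mul_norm _ _))

theorem norm_sub_le_add_of_le {V V' U U' : ι → ℝ} (hV : V' ≤ V) (hU : U ≤ U') :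
    ‖V - V'‖ ≤ ‖V - U‖ + ‖V' - U'‖ := by
  refine (pi_norm_le_iff_of_nonneg (by positivity)).2 fun x => ?_
  have h₁ := norm_le_pi_norm (V - U) x
  have h₂ := norm_le_pi_norm (V' - U') x
  simp only [Pi.sub_apply, Real.norm_eq_abs] at h₁ h₂ ⊢
  rw [abs_of_nonneg (sub_nonneg.2 (hV x))]
  linarith [le_abs_self (V x - U x), neg_abs_le (V' x - U' x), hU x]

end SupNorm

section Stochastic

variable {ι : Type*} [Fintype ι] [DecidableEq ι] {Q : Matrix ι ι ℝ}

theorem norm_mulVec_le_of_mem_rowStochastic (hQ : Q ∈ rowStochastic ℝ ι) (v : ι → ℝ) :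
    ‖Q *ᵥ v‖ ≤ ‖v‖ := by
  refine (pi_norm_le_iff_of_nonneg (norm_nonneg v)).2 fun x => ?_
  have hrow : ∑ y, |Q x y| = 1 := by
    simp_rw [abs_of_nonneg (nonneg_of_mem_rowStochastic hQ)]
    exact sum_row_of_mem_rowStochastic hQ x
  have := abs_dotProduct_le_sum_abs_mul_norm (Q x) v
  rwa [hrow, one_mul] at this

theorem isUnit_det_one_sub_smul_of_mem_rowStochastic (hQ : Q ∈ rowStochastic ℝ ι) {γ : ℝ}
    (hγ0 : 0 ≤ γ) (hγ1 : γ < 1) : IsUnit (1 - γ • Q).det := by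
  refine isUnit_iff_ne_zero.2 fun hdet => ?_
  obtain ⟨v, hv, hker⟩ := exists_mulVec_eq_zero_iff.2 hdet
  rw [sub_mulVec, one_mulVec, sub_eq_zero, smul_mulVec] at hker
  have hcontr : ‖v‖ ≤ γ * ‖v‖ :=
    calc ‖v‖ = ‖γ • Q *ᵥ v‖ := by rw [← hker]
      _ = γ * ‖Q *ᵥ v‖ := by rw [norm_smul, Real.norm_of_nonneg hγ0]
      _ ≤ γ * ‖v‖ := mul_le_mul_of_nonneg_left (norm_mulVec_le_of_mem_rowStochastic hQ v) hγ0
  exact hv (norm_le_zero_iff.1 (by nlinarith [norm_nonneg v]))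

theorem nonsing_inv_one_sub_smul_mulVec_eq {γ : ℝ} (h : IsUnit (1 - γ • Q).det) (c : ι → ℝ) :
    (1 - γ • Q)⁻¹ *ᵥ c = c + γ • Q *ᵥ ((1 - γ • Q)⁻¹ *ᵥ c) := by
  have hc : (1 - γ • Q) *ᵥ ((1 - γ • Q)⁻¹ *ᵥ c) = c := by
    rw [mulVec_mulVec, mul_nonsing_inv _ h, one_mulVec]
  rw [sub_mulVec, one_mulVec, smul_mulVec] at hc
  nth_rw 2 [← hc]
  exact (sub_add_cancel _ _).symm

theorem mul_norm_sub_le_of_eq_add_smul_mulVec {Q' : Matrix ι ι ℝ}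
    (hQ' : Q' ∈ rowStochastic ℝ ι) {γ : ℝ} (hγ0 : 0 ≤ γ) {c V V' : ι → ℝ}
    (hV : V = c + γ • Q *ᵥ V) (hV' : V' = c + γ • Q' *ᵥ V') :
    (1 - γ) * ‖V - V'‖ ≤ γ * ‖(Q - Q') *ᵥ V‖ := by
  have hdiff : V - V' = γ • (Q' *ᵥ (V - V') + (Q - Q') *ᵥ V) := by
    conv_lhs => rw [hV, hV']
    rw [mulVec_sub, sub_mulVec, smul_add, smul_sub, smul_sub]
    abel
  have hle : ‖V - V'‖ ≤ γ * ‖V - V'‖ + γ * ‖(Q - Q') *ᵥ V‖ :=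
    calc ‖V - V'‖ = γ * ‖Q' *ᵥ (V - V') + (Q - Q') *ᵥ V‖ := by
          rw [congrArg norm hdiff, norm_smul, Real.norm_of_nonneg hγ0]
      _ ≤ γ * (‖Q' *ᵥ (V - V')‖ + ‖(Q - Q') *ᵥ V‖) :=
          mul_le_mul_of_nonneg_left (norm_add_le _ _) hγ0
      _ ≤ γ * (‖V - V'‖ + ‖(Q - Q') *ᵥ V‖) := by
          gcongr
          exact norm_mulVec_le_of_mem_rowStochastic hQ' _
      _ = γ * ‖V - V'‖ + γ * ‖(Q - Q') *ᵥ V‖ := mul_add ..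
  linarith

end Stochastic

section Policy

variable {S A : Type*} [Fintype S] {P : S → A → S → ℝ}

theorem norm_polMat_sub_polMat_mulVec_le {Pbar : S → A → S → ℝ} {κ : Type*} [Fintype κ]
    (φ : κ → S → ℝ) {TV ε : ℝ} (hTV0 : 0 ≤ TV) (hε0 : 0 ≤ ε)
    (hTV : ∀ x a, ∑ y, |P x a y - Pbar x a y| ≤ TV)
    (hφ : ∀ x a, ∑ i, |∑ y, (P x a y - Pbar x a y) * φ i y| ≤ ε)
    (μ : S → A) (v : S → ℝ) (w : κ → ℝ) :
    ‖(polMat P μ - polMat Pbar μ) *ᵥ v‖ ≤ TV * ‖v - fun y => ∑ i, w i * φ i y‖ + ε * ‖w‖ := by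
  refine (pi_norm_le_iff_of_nonneg (by positivity)).2 fun x => ?_
  refine (abs_dotProduct_le_of_approx (fun y => P x (μ x) y - Pbar x (μ x) y) v φ w).trans ?_
  gcongr
  exacts [hTV x (μ x), hφ x (μ x)]

variable [DecidableEq S]

theorem polMat_mem_rowStochastic (h0 : ∀ x a y, 0 ≤ P x a y) (h1 : ∀ x a, ∑ y, P x a y = 1)
    (μ : S → A) : polMat P μ ∈ rowStochastic ℝ S :=
  mem_rowStochastic_iff_sum.2 ⟨fun x y => h0 x (μ x) y, fun x => h1 x (μ x)⟩

theorem polVal_eq_add_smul_mulVec {γ : ℝ} (hγ0 : 0 ≤ γ) (hγ1 : γ < 1) (r : S → A → ℝ)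
    {μ : S → A} (hP : polMat P μ ∈ rowStochastic ℝ S) :
    polVal γ r P μ = (fun x => r x (μ x)) + γ • polMat P μ *ᵥ polVal γ r P μ :=
  nonsing_inv_one_sub_smul_mulVec_eq
    (isUnit_det_one_sub_smul_of_mem_rowStochastic hP hγ0 hγ1) _

theorem norm_polVal_sub_polVal_le {γ : ℝ} (hγ0 : 0 ≤ γ) (hγ1 : γ < 1) (r : S → A → ℝ)
    {Pbar : S → A → S → ℝ} {κ : Type*} [Fintype κ] (φ : κ → S → ℝ) {TV ε : ℝ}
    (hTV0 : 0 ≤ TV) (hε0 : 0 ≤ ε) (hTV : ∀ x a, ∑ y, |P x a y - Pbar x a y| ≤ TV)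
    (hφ : ∀ x a, ∑ i, |∑ y, (P x a y - Pbar x a y) * φ i y| ≤ ε)
    {μ : S → A} (hP : polMat P μ ∈ rowStochastic ℝ S) (hPbar : polMat Pbar μ ∈ rowStochastic ℝ S)
    (w : κ → ℝ) :
    ‖polVal γ r P μ - polVal γ r Pbar μ‖ ≤
      γ / (1 - γ) * (TV * ‖polVal γ r P μ - fun y => ∑ i, w i * φ i y‖ + ε * ‖w‖) := by
  have hsim := mul_norm_sub_le_of_eq_add_smul_mulVec hPbar hγ0
    (polVal_eq_add_smul_mulVec hγ0 hγ1 r hP) (polVal_eq_add_smul_mulVec hγ0 hγ1 r hPbar)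
  have hdev := norm_polMat_sub_polMat_mulVec_le φ hTV0 hε0 hTV hφ μ (polVal γ r P μ) w
  rw [div_mul_eq_mul_div, le_div_iff₀ (sub_pos.2 hγ1)]
  linarith [mul_le_mul_of_nonneg_left hdev hγ0]

end Policy

theorem stmt14_general {S A : Type*} [Fintype S] [DecidableEq S]
    (P Pbar : S → A → S → ℝ)
    (hP0 : ∀ x a y, 0 ≤ P x a y) (hP1 : ∀ x a, ∑ y, P x a y = 1)
    (hPbar0 : ∀ x a y, 0 ≤ Pbar x a y) (hPbar1 : ∀ x a, ∑ y, Pbar x a y = 1)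
    (r : S → A → ℝ) (γ : ℝ) (hγ0 : 0 ≤ γ) (hγ1 : γ < 1)
    (d : ℕ) (φ : Fin d → S → ℝ) (εM εQ β : ℝ)
    (hεM : 0 ≤ εM) (hεQ : 0 ≤ εQ) (hβ : 0 < β)
    (hTV : ∀ x a, ∑ y, |P x a y - Pbar x a y| ≤ Real.sqrt 2 * εM + (2 / β) * εQ)
    (hQ : ∀ x a, ∑ i : Fin d, |∑ y, (P x a y - Pbar x a y) * φ i y| ≤
      Real.sqrt d * (β * εM + 2 * εQ))
    (e₁ e₂ : ℝ)
    (he₁ : e₁ = (γ / (1 - γ)) * (Real.sqrt 2 * εM + (2 / β) * εQ))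
    (he₂ : e₂ = (γ * Real.sqrt d / (1 - γ)) * (β * εM + 2 * εQ))
    (hsmall : e₁ < 1)
    (πstar πbar : S → A)
    (hopt : ∀ μ : S → A, ∀ x, polVal γ r P μ x ≤ polVal γ r P πstar x)
    (hoptbar : ∀ μ : S → A, ∀ x, polVal γ r Pbar μ x ≤ polVal γ r Pbar πbar x) :
    ∀ w : Fin d → ℝ,
      supNorm (fun x => polVal γ r P πstar x - polVal γ r P πbar x) ≤
        (2 * e₁ / (1 - e₁)) * supNorm (fun x => polVal γ r P πstar x - ∑ i, w i * φ i x) +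
          (2 * e₂ / (1 - e₁)) * supNorm w := by
  intro w
  set Φw : S → ℝ := fun x => ∑ i, w i * φ i x
  rw [supNorm_eq_norm_s14, supNorm_eq_norm_s14, supNorm_eq_norm_s14, div_mul_eq_mul_div, div_mul_eq_mul_div,
    ← add_div, le_div_iff₀ (sub_pos.2 hsmall)]
  change ‖polVal γ r P πstar - polVal γ r P πbar‖ * _ ≤ 2 * e₁ * ‖polVal γ r P πstar - Φw‖ + _
  have hsim (μ : S → A) : ‖polVal γ r P μ - polVal γ r Pbar μ‖ ≤
      e₁ * ‖polVal γ r P μ - Φw‖ + e₂ * ‖w‖ := by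
    refine (norm_polVal_sub_polVal_le hγ0 hγ1 r φ (by positivity) (by positivity) hTV hQ
      (polMat_mem_rowStochastic hP0 hP1 μ) (polMat_mem_rowStochastic hPbar0 hPbar1 μ) w).trans_eq ?_
    rw [he₁, he₂]
    ring
  have he₁0 : 0 ≤ e₁ := by
    rw [he₁]
    have hratio : 0 ≤ γ / (1 - γ) := div_nonneg hγ0 (sub_nonneg.2 hγ1.le)
    positivity
  have hopt_gap := norm_sub_le_add_of_le (hopt πbar) (hoptbar πstar)
  have happrox_bar : ‖polVal γ r P πbar - Φw‖ ≤
      ‖polVal γ r P πstar - polVal γ r P πbar‖ + ‖polVal γ r P πstar - Φw‖ := by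
    rw [norm_sub_rev (polVal γ r P πstar) (polVal γ r P πbar)]
    exact norm_sub_le_norm_sub_add_norm_sub _ _ _
  linarith [hsim πstar, hsim πbar, mul_le_mul_of_nonneg_left happrox_bar he₁0]

theorem stmt14 {S A : Type*} [Fintype S] [Nonempty S] [DecidableEq S] [Fintype A] [Nonempty A]
    (P Pbar : S → A → S → ℝ)
    (hP0 : ∀ x a y, 0 ≤ P x a y) (hP1 : ∀ x a, ∑ y, P x a y = 1)
    (hPbar0 : ∀ x a y, 0 ≤ Pbar x a y) (hPbar1 : ∀ x a, ∑ y, Pbar x a y = 1)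
    (r : S → A → ℝ) (γ : ℝ) (hγ0 : 0 ≤ γ) (hγ1 : γ < 1)
    (d : ℕ) (φ : Fin d → S → ℝ) (εM εQ β : ℝ)
    (hεM : 0 ≤ εM) (hεQ : 0 ≤ εQ) (hβ : 0 < β)
    (hTV : ∀ x a, ∑ y, |P x a y - Pbar x a y| ≤ Real.sqrt 2 * εM + (2 / β) * εQ)
    (hQ : ∀ x a, ∑ i : Fin d, |∑ y, (P x a y - Pbar x a y) * φ i y| ≤
      Real.sqrt d * (β * εM + 2 * εQ))
    (e₁ e₂ : ℝ)
    (he₁ : e₁ = (γ / (1 - γ)) * (Real.sqrt 2 * εM + (2 / β) * εQ))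
    (he₂ : e₂ = (γ * Real.sqrt d / (1 - γ)) * (β * εM + 2 * εQ))
    (hsmall : e₁ < 1)
    (πstar πbar : S → A)
    (hopt : ∀ μ : S → A, ∀ x, polVal γ r P μ x ≤ polVal γ r P πstar x)
    (hoptbar : ∀ μ : S → A, ∀ x, polVal γ r Pbar μ x ≤ polVal γ r Pbar πbar x) :
    ∀ w : Fin d → ℝ,
      supNorm (fun x => polVal γ r P πstar x - polVal γ r P πbar x) ≤
        (2 * e₁ / (1 - e₁)) * supNorm (fun x => polVal γ r P πstar x - ∑ i, w i * φ i x) +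
          (2 * e₂ / (1 - e₁)) * supNorm w :=
  stmt14_general P Pbar hP0 hP1 hPbar0 hPbar1 r γ hγ0 hγ1 d φ εM εQ β hεM hεQ hβ hTV hQ e₁ e₂ he₁
    he₂ hsmall πstar πbar hopt hoptbar
end
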